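/- For every w ∈ W, the element stab⁺_w ∈ Fun(W,Q) satisfies: (i) stab⁺_w(v) = 0 unless v ≤ w in the Bruhat order, and (ii) stab⁺_w(w) = q^{−ℓ(w)/2} · ∏_{β∈Φ⁺, wβ∈−Φ⁺} (q−e^{wβ}) · ∏_{β∈Φ⁺, wβ∈Φ⁺} (1−e^{wβ}). -/

import Mathlib

/-
STATEMENT 10: For every w ∈ W, the element stab⁺_w ∈ Fun(W,Q) satisfies:
(i) stab⁺_w(v) = 0 unless v ≤ w in the Bruhat order, and
(ii) stab⁺_w(w) = q^{−ℓ(w)/2} · ∏_{β∈Φ⁺, wβ∈−Φ⁺} (q−e^{wβ}) · ∏_{β∈Φ⁺, wβ∈Φ⁺} (1−e^{wβ}),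
where stab⁺_w := q^{−ℓ(w)/2}·𝒯⁺_{w⁻¹}(x_{−w₀}·f_e).
-/

open scoped Classical

set_option maxHeartbeats 1000000
set_option synthInstance.maxHeartbeats 400000

noncomputable section

/-- `Q = Frac(ℤ[q^{1/2},q^{-1/2}][Λ])`, the fraction field of the group algebra of the weight
lattice `Λ` over the Laurent polynomial ring `ℤ[q^{1/2},q^{-1/2}]` (the Laurent variable is
`q^{1/2}`). -/
abbrev Qf (Λ : Type*) [AddCommGroup Λ] : Type _ :=
  FractionRing (AddMonoidAlgebra (LaurentPolynomial ℤ) Λ)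

/-- `e^λ ∈ Q`. -/
def E {Λ : Type*} [AddCommGroup Λ] (l : Λ) : Qf Λ :=
  algebraMap (AddMonoidAlgebra (LaurentPolynomial ℤ) Λ) (Qf Λ) (AddMonoidAlgebra.single l 1)

/-- `q^{1/2} ∈ Q`. -/
def qh (Λ : Type*) [AddCommGroup Λ] : Qf Λ :=
  algebraMap (AddMonoidAlgebra (LaurentPolynomial ℤ) Λ) (Qf Λ)
    (AddMonoidAlgebra.single 0 (LaurentPolynomial.T 1))

/-- The group structure on `A ≃+ A` (composition), as `AddAut.group` gave it in the older
Mathlib: `g * h = h.trans g`. -/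
instance addEquivSelfGroupOld {A : Type*} [Add A] : Group (A ≃+ A) where
  mul g h := AddEquiv.trans h g
  one := AddEquiv.refl _
  inv := AddEquiv.symm
  mul_assoc _ _ _ := rfl
  one_mul _ := rfl
  mul_one _ := rfl
  inv_mul_cancel := AddEquiv.self_trans_symm

variable {n : ℕ} {W : Type*} [Group W] {M : CoxeterMatrix (Fin n)} (cs : CoxeterSystem M W)
variable {Λ : Type*} [AddCommGroup Λ] [IsDomain (AddMonoidAlgebra (LaurentPolynomial ℤ) Λ)]

/-- The operator `𝒯⁺_i` on `Fun(W,Q)`: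
`(𝒯⁺_i f)(w) = ((q−1)/(1−e^{wα_i}))·f(w) + ((q−e^{wα_i})/(1−e^{−wα_i}))·f(w s_i)`. -/
def TP (σ : W →* (Λ ≃+ Λ)) (α : Fin n → Λ) (i : Fin n) (f : W → Qf Λ) : W → Qf Λ := fun w =>
  (qh Λ ^ 2 - 1) / (1 - E (σ w (α i))) * f w +
    (qh Λ ^ 2 - E (σ w (α i))) / (1 - E (-(σ w (α i)))) * f (w * cs.simple i)

/-- The operator `𝒯⁻_i` on `Fun(W,Q)`:
`(𝒯⁻_i f)(w) = ((q−1)/(1−e^{wα_i}))·f(w) + ((1−q e^{−wα_i})/(1−e^{wα_i}))·f(w s_i)`. -/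
def TM (σ : W →* (Λ ≃+ Λ)) (α : Fin n → Λ) (i : Fin n) (f : W → Qf Λ) : W → Qf Λ := fun w =>
  (qh Λ ^ 2 - 1) / (1 - E (σ w (α i))) * f w +
    (1 - qh Λ ^ 2 * E (-(σ w (α i)))) / (1 - E (σ w (α i))) * f (w * cs.simple i)

/-- Composite `𝒯⁺_{i_1} ∘ ⋯ ∘ 𝒯⁺_{i_l}` along a word `ω = [i_1, …, i_l]`. -/
def TPcomp (σ : W →* (Λ ≃+ Λ)) (α : Fin n → Λ) (ω : List (Fin n)) : (W → Qf Λ) → (W → Qf Λ) :=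
  ω.foldr (fun i g => TP cs σ α i ∘ g) id

/-- Composite `𝒯⁻_{i_1} ∘ ⋯ ∘ 𝒯⁻_{i_l}` along a word `ω = [i_1, …, i_l]`. -/
def TMcomp (σ : W →* (Λ ≃+ Λ)) (α : Fin n → Λ) (ω : List (Fin n)) : (W → Qf Λ) → (W → Qf Λ) :=
  ω.foldr (fun i g => TM cs σ α i ∘ g) id

/-- The indicator function `f_v` of `v ∈ W`. -/
def fdelta (v : W) : W → Qf Λ := fun u => if u = v then 1 else 0

/-- `x_{−w₀} = ∏_{α∈Φ⁺} (1−e^{α})`. -/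
def xneg (Φp : Finset Λ) : Qf Λ := ∏ a ∈ Φp, (1 - E a)

/-- The stable basis element
`stab⁺_w := q^{−ℓ(w)/2}·𝒯⁺_{w⁻¹}(x_{−w₀}·f_e)`, where `𝒯⁺_{w⁻¹}` is computed along the
chosen reduced word `red w⁻¹`. -/
def stabP (σ : W →* (Λ ≃+ Λ)) (Φp : Finset Λ) (α : Fin n → Λ) (red : W → List (Fin n))
    (w : W) : W → Qf Λ := fun u =>
  qh Λ ^ (-(cs.length w : ℤ)) *
    TPcomp cs σ α (red w⁻¹) (fun v => xneg Φp * fdelta (1 : W) v) u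

/-- The (strong) Bruhat order on `W`: `u ≤ w` iff some reduced word for `w` has a subword
whose product is `u`. -/
def BruhatLE (u w : W) : Prop :=
  ∃ ω : List (Fin n), cs.wordProd ω = w ∧ ω.length = cs.length w ∧
    ∃ ω' : List (Fin n), ω'.Sublist ω ∧ cs.wordProd ω' = u

/-- The localization pairing
`⟨f,g⟩ = Σ_{u∈W} f(u)·g(u) / ∏_{α∈Φ⁺} (1−e^{uα})(1−q e^{−uα})`. -/
def pairing [Fintype W] (σ : W →* (Λ ≃+ Λ)) (Φp : Finset Λ) (f g : W → Qf Λ) : Qf Λ :=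
  ∑ u : W, f u * g u / ∏ a ∈ Φp, ((1 - E (σ u a)) * (1 - qh Λ ^ 2 * E (-(σ u a))))


section Aux

/-- Torsion-freeness of `Λ` from the domain assumption on the group algebra. -/
private lemma tf_nat {Λ : Type*} [AddCommGroup Λ]
    [IsDomain (AddMonoidAlgebra (LaurentPolynomial ℤ) Λ)]
    (a : Λ) (m : ℕ) (hm : 0 < m) (h : m • a = 0) : a = 0 := by
  by_contra ha
  have hex : ∃ k, 0 < k ∧ k • a = 0 := ⟨m, hm, h⟩
  obtain ⟨hm₀pos, hm₀a⟩ := Nat.find_spec hex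
  have hmin : ∀ k, k < Nat.find hex → ¬(0 < k ∧ k • a = 0) := fun k hk => Nat.find_min hex hk
  set m₀ := Nat.find hex with hm₀def
  set x : AddMonoidAlgebra (LaurentPolynomial ℤ) Λ := AddMonoidAlgebra.single a 1 with hxdef
  have hxpow : ∀ k : ℕ, x ^ k = AddMonoidAlgebra.single (k • a) (1 : LaurentPolynomial ℤ) := by
    intro k
    rw [hxdef, AddMonoidAlgebra.single_pow, one_pow]
  have hgeom : (∑ k ∈ Finset.range m₀, x ^ k) * (x - 1) = 0 := by
    rw [geom_sum_mul, hxpow m₀, hm₀a, ← AddMonoidAlgebra.one_def, sub_self]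
  rcases mul_eq_zero.mp hgeom with hS | hx1
  · have hS0 : (∑ k ∈ Finset.range m₀, x ^ k).coeff 0 = (1 : LaurentPolynomial ℤ) := by
      rw [AddMonoidAlgebra.coeff_sum, Finset.sum_apply']
      rw [Finset.sum_eq_single 0]
      · rw [hxpow, zero_smul, AddMonoidAlgebra.coeff_single]
        exact Finsupp.single_eq_same
      · intro k hk hk0
        rw [hxpow, AddMonoidAlgebra.coeff_single]
        have hka : k • a ≠ 0 := by
          intro hka
          exact hmin k (Finset.mem_range.mp hk) ⟨Nat.pos_of_ne_zero hk0, hka⟩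
        exact Finsupp.single_eq_of_ne hka.symm
      · intro h0
        exact absurd (Finset.mem_range.mpr hm₀pos) h0
    rw [hS] at hS0
    simp at hS0
  · rw [sub_eq_zero, AddMonoidAlgebra.one_def] at hx1
    have h2 := congrArg (fun f : AddMonoidAlgebra (LaurentPolynomial ℤ) Λ => f.coeff a) hx1
    simp only [hxdef, AddMonoidAlgebra.coeff_single] at h2
    rw [Finsupp.single_eq_of_ne ha, Finsupp.single_eq_same] at h2
    exact one_ne_zero h2

private lemma tf_int {Λ : Type*} [AddCommGroup Λ]
    [IsDomain (AddMonoidAlgebra (LaurentPolynomial ℤ) Λ)]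
    (a : Λ) (c : ℤ) (hc : c ≠ 0) (h : c • a = 0) : a = 0 := by
  have habs : (c.natAbs : ℤ) • a = 0 := by
    rcases Int.natAbs_eq c with he | he
    · rw [← he]; exact h
    · rw [show (c.natAbs : ℤ) = -c by omega, neg_zsmul, h, neg_zero]
  rw [natCast_zsmul] at habs
  exact tf_nat a c.natAbs (Int.natAbs_pos.mpr hc) habs

private lemma E_ne_one {Λ : Type*} [AddCommGroup Λ]
    [IsDomain (AddMonoidAlgebra (LaurentPolynomial ℤ) Λ)]
    {a : Λ} (ha : a ≠ 0) : E a ≠ (1 : Qf Λ) := by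
  intro hE
  have hinj := IsFractionRing.injective (AddMonoidAlgebra (LaurentPolynomial ℤ) Λ) (Qf Λ)
  have h1 : (AddMonoidAlgebra.single a 1 : AddMonoidAlgebra (LaurentPolynomial ℤ) Λ) =
      AddMonoidAlgebra.single 0 1 := by
    apply hinj
    rw [show (AddMonoidAlgebra.single (0 : Λ) (1 : LaurentPolynomial ℤ)) = 1 from
      (AddMonoidAlgebra.one_def).symm, map_one]
    exact hE
  have h2 := congrArg (fun f : AddMonoidAlgebra (LaurentPolynomial ℤ) Λ => f.coeff a) h1
  simp only [AddMonoidAlgebra.coeff_single] at h2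
  rw [Finsupp.single_eq_of_ne ha, Finsupp.single_eq_same] at h2
  exact one_ne_zero h2

private lemma sigma_mul_apply {W : Type*} [Group W] {Λ : Type*} [AddCommGroup Λ]
    (σ : W →* (Λ ≃+ Λ)) (u v : W) (b : Λ) :
    σ (u * v) b = σ u (σ v b) := by
  rw [map_mul]; rfl

private lemma sigma_one_apply {W : Type*} [Group W] {Λ : Type*} [AddCommGroup Λ]
    (σ : W →* (Λ ≃+ Λ)) (b : Λ) : σ 1 b = b := by
  rw [map_one]; rfl

private lemma s_alpha (σ : W →* (Λ ≃+ Λ)) (α : Fin n → Λ) (αv : Fin n → (Λ →+ ℤ))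
    (hrefl : ∀ (i : Fin n) (l : Λ), σ (cs.simple i) l = l - αv i l • α i)
    (hpair : ∀ i, αv i (α i) = 2) (i : Fin n) :
    σ (cs.simple i) (α i) = -α i := by
  rw [hrefl i (α i), hpair i, two_zsmul]
  abel

private lemma s_invol (σ : W →* (Λ ≃+ Λ)) (i : Fin n) (b : Λ) :
    σ (cs.simple i) (σ (cs.simple i) b) = b := by
  rw [← sigma_mul_apply, cs.simple_mul_simple_self, sigma_one_apply]

private lemma phi_s (σ : W →* (Λ ≃+ Λ)) (Φp : Finset Λ) (α : Fin n → Λ)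
    (αv : Fin n → (Λ →+ ℤ))
    (hαmem : ∀ i, α i ∈ Φp)
    (hrefl : ∀ (i : Fin n) (l : Λ), σ (cs.simple i) l = l - αv i l • α i)
    (hpair : ∀ i, αv i (α i) = 2)
    (hperm : ∀ i, ∀ b ∈ Φp, b ≠ α i → σ (cs.simple i) b ∈ Φp)
    (i : Fin n) (b : Λ)
    (hb : b ∈ Φp ∨ -b ∈ Φp) :
    σ (cs.simple i) b ∈ Φp ∨ -(σ (cs.simple i) b) ∈ Φp := by
  rcases hb with hb | hb
  · by_cases hbi : b = α i
    · right
      rw [hbi, s_alpha cs σ α αv hrefl hpair i, neg_neg]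
      exact hαmem i
    · left; exact hperm i b hb hbi
  · by_cases hbi : -b = α i
    · left
      have hb' : b = -α i := by rw [← hbi, neg_neg]
      rw [hb', map_neg, s_alpha cs σ α αv hrefl hpair i, neg_neg]
      exact hαmem i
    · right
      rw [show σ (cs.simple i) b = -(σ (cs.simple i) (-b)) by rw [map_neg, neg_neg], neg_neg]
      exact hperm i (-b) hb hbi

private lemma phi_list (σ : W →* (Λ ≃+ Λ)) (Φp : Finset Λ) (α : Fin n → Λ)
    (αv : Fin n → (Λ →+ ℤ))
    (hαmem : ∀ i, α i ∈ Φp)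
    (hrefl : ∀ (i : Fin n) (l : Λ), σ (cs.simple i) l = l - αv i l • α i)
    (hpair : ∀ i, αv i (α i) = 2)
    (hperm : ∀ i, ∀ b ∈ Φp, b ≠ α i → σ (cs.simple i) b ∈ Φp)
    (ρ : List (Fin n)) (b : Λ) (hb : b ∈ Φp ∨ -b ∈ Φp) :
    σ (cs.wordProd ρ) b ∈ Φp ∨ -(σ (cs.wordProd ρ) b) ∈ Φp := by
  induction ρ with
  | nil =>
    rw [cs.wordProd_nil, sigma_one_apply]
    exact hb
  | cons i ρ' ih =>
    rw [cs.wordProd_cons, sigma_mul_apply]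
    exact phi_s cs σ Φp α αv hαmem hrefl hpair hperm i _ ih

private lemma finiteW (w0 : W) (hw0 : ∀ u : W, cs.length u ≤ cs.length w0)
    (red : W → List (Fin n))
    (hred : ∀ v : W, cs.wordProd (red v) = v ∧ (red v).length = cs.length v) :
    Finite W := by
  have hfin : {l : List (Fin n) | l.length ≤ cs.length w0}.Finite :=
    List.finite_length_le (Fin n) (cs.length w0)
  haveI := hfin.to_subtype
  apply Finite.of_surjective
    (fun l : {l : List (Fin n) | l.length ≤ cs.length w0} => cs.wordProd l.1)
  intro w
  exact ⟨⟨red w, by rw [Set.mem_setOf_eq, (hred w).2]; exact hw0 w⟩, (hred w).1⟩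

private lemma conj_simple (σ : W →* (Λ ≃+ Λ)) (hfaith : Function.Injective σ)
    (Φp : Finset Λ) (α : Fin n → Λ) (αv : Fin n → (Λ →+ ℤ))
    (hαmem : ∀ i, α i ∈ Φp)
    (hrefl : ∀ (i : Fin n) (l : Λ), σ (cs.simple i) l = l - αv i l • α i)
    (hpair : ∀ i, αv i (α i) = 2)
    (hdisj : ∀ b ∈ Φp, -b ∉ Φp)
    (hfin : Finite W)
    (u : W) (i k : Fin n) (h : σ u (α i) = α k) :
    u * cs.simple i = cs.simple k * u := by
  haveI := hfin
  have hak : α k ≠ 0 := by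
    intro h0
    apply hdisj (α k) (hαmem k)
    rw [h0, neg_zero, ← h0]
    exact hαmem k
  set x := cs.simple k * (u * cs.simple i * u⁻¹) with hxdef
  set f : Λ → ℤ := fun l => αv i (σ u⁻¹ l) - αv k l with hfdef
  have huinv : σ u⁻¹ (α k) = α i := by
    rw [← h, ← sigma_mul_apply, inv_mul_cancel, sigma_one_apply]
  have huu : ∀ l : Λ, σ u (σ u⁻¹ l) = l := by
    intro l
    rw [← sigma_mul_apply, mul_inv_cancel, sigma_one_apply]
  have hfl : ∀ (l : Λ) (c : ℤ), f (l + c • α k) = f l := by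
    intro l c
    simp only [hfdef, map_add, map_zsmul, huinv, smul_eq_mul, hpair]
    ring
  have hσx : ∀ l, σ x l = l + f l • α k := by
    intro l
    rw [hxdef, sigma_mul_apply, sigma_mul_apply, sigma_mul_apply]
    rw [hrefl i (σ u⁻¹ l), map_sub, map_zsmul, h, huu, hrefl k]
    simp only [hfdef, map_sub, map_zsmul, hpair, smul_eq_mul]
    module
  have hpow : ∀ (m : ℕ) (l : Λ), σ (x ^ m) l = l + ((m : ℤ) * f l) • α k := by
    intro m
    induction m with
    | zero =>
      intro l
      simp [sigma_one_apply]
      rfl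
    | succ m ih =>
      intro l
      rw [pow_succ, sigma_mul_apply, hσx l, ih (l + f l • α k), hfl l (f l)]
      push_cast
      module
  have hx1 : x = 1 := by
    apply hfaith
    rw [map_one]
    refine DFunLike.ext _ _ fun l => ?_
    have hxm := hpow (orderOf x) l
    rw [pow_orderOf_eq_one, sigma_one_apply] at hxm
    have hc : ((orderOf x : ℤ) * f l) • α k = 0 := by
      have := hxm.symm
      rwa [add_eq_left] at this
    have hfl0 : f l = 0 := by
      by_contra hne
      apply hak
      refine tf_int (α k) ((orderOf x : ℤ) * f l) ?_ hc
      have hpos : 0 < orderOf x := orderOf_pos x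
      intro hmul
      rcases mul_eq_zero.mp hmul with h0 | h0
      · omega
      · exact hne h0
    show σ x l = l
    rw [hσx l, hfl0, zero_smul, add_zero]
  have h3 : cs.simple k * x = cs.simple k * 1 := by rw [hx1]
  rw [hxdef, cs.simple_mul_simple_cancel_left, mul_one] at h3
  rw [← h3]
  group

private lemma del (σ : W →* (Λ ≃+ Λ)) (hfaith : Function.Injective σ)
    (Φp : Finset Λ) (α : Fin n → Λ) (αv : Fin n → (Λ →+ ℤ))
    (hαmem : ∀ i, α i ∈ Φp)
    (hrefl : ∀ (i : Fin n) (l : Λ), σ (cs.simple i) l = l - αv i l • α i)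
    (hpair : ∀ i, αv i (α i) = 2)
    (hperm : ∀ i, ∀ b ∈ Φp, b ≠ α i → σ (cs.simple i) b ∈ Φp)
    (hdisj : ∀ b ∈ Φp, -b ∉ Φp)
    (hfin : Finite W)
    (ρ : List (Fin n)) (i : Fin n)
    (h : -(σ (cs.wordProd ρ) (α i)) ∈ Φp) :
    ∃ (ρ₁ : List (Fin n)) (k : Fin n) (ρ₂ : List (Fin n)),
      ρ = ρ₁ ++ k :: ρ₂ ∧ cs.wordProd ρ * cs.simple i = cs.wordProd (ρ₁ ++ ρ₂) := by
  induction ρ with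
  | nil =>
    exfalso
    rw [cs.wordProd_nil, sigma_one_apply] at h
    exact hdisj (α i) (hαmem i) h
  | cons k ρ' ih =>
    by_cases hneg : -(σ (cs.wordProd ρ') (α i)) ∈ Φp
    · obtain ⟨ρ₁, k', ρ₂, hdecomp, hprod⟩ := ih hneg
      refine ⟨k :: ρ₁, k', ρ₂, by rw [hdecomp]; rfl, ?_⟩
      rw [cs.wordProd_cons, mul_assoc, hprod, show (k :: ρ₁) ++ ρ₂ = k :: (ρ₁ ++ ρ₂) from rfl,
        cs.wordProd_cons]
    · have hpos : σ (cs.wordProd ρ') (α i) ∈ Φp := by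
        rcases phi_list cs σ Φp α αv hαmem hrefl hpair hperm ρ' (α i) (Or.inl (hαmem i)) with
          h1 | h2
        · exact h1
        · exact absurd h2 hneg
      have hαk : σ (cs.wordProd ρ') (α i) = α k := by
        by_contra hne
        have h1 : σ (cs.simple k) (σ (cs.wordProd ρ') (α i)) ∈ Φp := hperm k _ hpos hne
        rw [← sigma_mul_apply, ← cs.wordProd_cons] at h1
        exact hdisj _ h1 h
      have hconj := conj_simple cs σ hfaith Φp α αv hαmem hrefl hpair hdisj hfin
        (cs.wordProd ρ') i k hαk
      refine ⟨[], k, ρ', rfl, ?_⟩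
      rw [cs.wordProd_cons, List.nil_append, mul_assoc, hconj, ← mul_assoc,
        cs.simple_mul_simple_self, one_mul]

private lemma step_pos (σ : W →* (Λ ≃+ Λ)) (hfaith : Function.Injective σ)
    (Φp : Finset Λ) (α : Fin n → Λ) (αv : Fin n → (Λ →+ ℤ))
    (hαmem : ∀ i, α i ∈ Φp)
    (hrefl : ∀ (i : Fin n) (l : Λ), σ (cs.simple i) l = l - αv i l • α i)
    (hpair : ∀ i, αv i (α i) = 2)
    (hperm : ∀ i, ∀ b ∈ Φp, b ≠ α i → σ (cs.simple i) b ∈ Φp)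
    (hdisj : ∀ b ∈ Φp, -b ∉ Φp)
    (hfin : Finite W)
    (red : W → List (Fin n))
    (hred : ∀ v : W, cs.wordProd (red v) = v ∧ (red v).length = cs.length v)
    (w : W) (i : Fin n) (hlen : cs.length w < cs.length (w * cs.simple i)) :
    σ w (α i) ∈ Φp := by
  rcases phi_list cs σ Φp α αv hαmem hrefl hpair hperm (red w) (α i) (Or.inl (hαmem i)) with
    hpos | hneg
  · rwa [(hred w).1] at hpos
  · exfalso
    obtain ⟨ρ₁, k, ρ₂, hdecomp, hprod⟩ :=
      del cs σ hfaith Φp α αv hαmem hrefl hpair hperm hdisj hfin (red w) i hneg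
    have h1 : cs.length (w * cs.simple i) ≤ ρ₁.length + ρ₂.length := by
      rw [← (hred w).1]
      calc cs.length (cs.wordProd (red w) * cs.simple i)
          = cs.length (cs.wordProd (ρ₁ ++ ρ₂)) := by rw [hprod]
        _ ≤ (ρ₁ ++ ρ₂).length := cs.length_wordProd_le _
        _ = ρ₁.length + ρ₂.length := List.length_append
    have h2 : (red w).length = ρ₁.length + (ρ₂.length + 1) := by
      rw [hdecomp]
      simp
    have h3 : (red w).length = cs.length w := (hred w).2
    omega

private lemma sup_lemma (σ : W →* (Λ ≃+ Λ)) (Φp : Finset Λ) (α : Fin n → Λ)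
    (ω : List (Fin n)) (v : W)
    (h : TPcomp cs σ α ω (fun u => xneg Φp * fdelta (1 : W) u) v ≠ 0) :
    ∃ τ : List (Fin n), τ.Sublist ω.reverse ∧ cs.wordProd τ = v := by
  induction ω generalizing v with
  | nil =>
    refine ⟨[], by simp, ?_⟩
    have hv : v = 1 := by
      by_contra hv
      apply h
      show xneg Φp * fdelta (1 : W) v = 0
      simp [fdelta, hv]
    rw [cs.wordProd_nil, hv]
  | cons i ω' ih =>
    rw [List.reverse_cons]
    by_cases h1 : TPcomp cs σ α ω' (fun u => xneg Φp * fdelta (1 : W) u) v ≠ 0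
    · obtain ⟨τ, hsub, hprod⟩ := ih v h1
      exact ⟨τ, hsub.trans (List.sublist_append_left _ _), hprod⟩
    · rw [not_not] at h1
      have h2 : TPcomp cs σ α ω' (fun u => xneg Φp * fdelta (1 : W) u) (v * cs.simple i) ≠ 0 := by
        intro h2
        apply h
        show TP cs σ α i (TPcomp cs σ α ω' (fun u => xneg Φp * fdelta (1 : W) u)) v = 0
        simp only [TP]
        rw [h1, h2, mul_zero, mul_zero, add_zero]
      obtain ⟨τ, hsub, hprod⟩ := ih (v * cs.simple i) h2
      refine ⟨τ ++ [i], hsub.append (List.Sublist.refl [i]), ?_⟩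
      rw [cs.wordProd_append, hprod, cs.wordProd_singleton]
      exact cs.simple_mul_simple_cancel_right i

private lemma main_lemma (σ : W →* (Λ ≃+ Λ)) (hfaith : Function.Injective σ)
    (Φp : Finset Λ) (α : Fin n → Λ) (αv : Fin n → (Λ →+ ℤ))
    (hαmem : ∀ i, α i ∈ Φp)
    (hrefl : ∀ (i : Fin n) (l : Λ), σ (cs.simple i) l = l - αv i l • α i)
    (hpair : ∀ i, αv i (α i) = 2)
    (hperm : ∀ i, ∀ b ∈ Φp, b ≠ α i → σ (cs.simple i) b ∈ Φp)
    (hdisj : ∀ b ∈ Φp, -b ∉ Φp)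
    (hfin : Finite W)
    (red : W → List (Fin n))
    (hred : ∀ v : W, cs.wordProd (red v) = v ∧ (red v).length = cs.length v)
    (ω : List (Fin n)) (w : W) (h1 : cs.wordProd ω = w⁻¹) (h2 : ω.length = cs.length w) :
    TPcomp cs σ α ω (fun u => xneg Φp * fdelta (1 : W) u) w =
      (∏ b ∈ Φp.filter (fun b => -(σ w b) ∈ Φp), (qh Λ ^ 2 - E (σ w b))) *
      (∏ b ∈ Φp.filter (fun b => σ w b ∈ Φp), (1 - E (σ w b))) := by
  induction ω generalizing w with
  | nil =>
    have hw : w = 1 := by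
      rw [cs.wordProd_nil] at h1
      rw [← inv_inv w, ← h1, inv_one]
    subst hw
    have hσ1 : ∀ b : Λ, σ 1 b = b := fun b => sigma_one_apply σ b
    rw [show TPcomp cs σ α [] (fun u => xneg Φp * fdelta (1 : W) u) 1
      = xneg Φp * fdelta (1 : W) 1 from rfl]
    rw [show fdelta (1 : W) (1 : W) = (1 : Qf Λ) from by simp [fdelta]]
    rw [Finset.filter_false_of_mem (fun b hb => by rw [hσ1 b]; exact hdisj b hb),
        Finset.filter_true_of_mem (fun b hb => by rw [hσ1 b]; exact hb)]
    simp only [Finset.prod_empty, one_mul, mul_one, xneg]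
    exact Finset.prod_congr rfl fun b _ => by rw [hσ1 b]
  | cons i ω' ih =>
    set w' := (cs.wordProd ω')⁻¹ with hw'def
    have h1' : cs.wordProd ω' = w'⁻¹ := by rw [hw'def, inv_inv]
    have hw : w = w' * cs.simple i := by
      rw [← inv_inv w, ← h1, cs.wordProd_cons, mul_inv_rev, cs.inv_simple, hw'def]
    have a4 : ω'.length + 1 = cs.length w := by
      rw [← h2]
      simp
    have hlw' : cs.length w' = ω'.length := by
      have b1 : cs.length (cs.wordProd ω') ≤ ω'.length := cs.length_wordProd_le ω'
      have b2 : cs.length w' = cs.length (cs.wordProd ω') := by rw [hw'def, cs.length_inv]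
      have b3 : cs.length w ≤ cs.length w' + 1 := by
        rw [hw]
        calc cs.length (w' * cs.simple i)
            ≤ cs.length w' + cs.length (cs.simple i) := cs.length_mul_le _ _
          _ = cs.length w' + 1 := by rw [cs.length_simple]
      omega
    have h2' : ω'.length = cs.length w' := hlw'.symm
    have hlen : cs.length w' < cs.length (w' * cs.simple i) := by
      rw [← hw]
      omega
    have hβ : σ w' (α i) ∈ Φp :=
      step_pos cs σ hfaith Φp α αv hαmem hrefl hpair hperm hdisj hfin red hred w' i hlen
    set β := σ w' (α i) with hβdef
    have hβne : -β ∉ Φp := hdisj β hβ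
    have hβ0 : β ≠ 0 := by
      intro h0
      apply hβne
      rw [h0, neg_zero, ← h0]
      exact hβ
    have hwalpha : σ w (α i) = -β := by
      rw [hw, sigma_mul_apply, s_alpha cs σ α αv hrefl hpair i, map_neg, ← hβdef]
    have hzero : TPcomp cs σ α ω' (fun u => xneg Φp * fdelta (1 : W) u) w = 0 := by
      by_contra hne
      obtain ⟨τ, hsub, hprod⟩ := sup_lemma cs σ Φp α ω' w hne
      have hcon : cs.length w ≤ ω'.length := by
        calc cs.length w = cs.length (cs.wordProd τ) := by rw [hprod]
          _ ≤ τ.length := cs.length_wordProd_le τ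
          _ ≤ ω'.reverse.length := hsub.length_le
          _ = ω'.length := List.length_reverse
      omega
    have hws : w * cs.simple i = w' := by
      rw [hw, cs.simple_mul_simple_cancel_right]
    have hIH := ih w' h1' h2'
    have hcomp1 : ∀ b : Λ, σ w (σ (cs.simple i) b) = σ w' b := by
      intro b
      rw [← sigma_mul_apply, hws]
    have hcomp2 : ∀ b : Λ, σ w' (σ (cs.simple i) b) = σ w b := by
      intro b
      rw [← sigma_mul_apply, ← hw]
    have hN : Φp.filter (fun b => -(σ w b) ∈ Φp) =
        insert (α i) ((Φp.filter (fun b => -(σ w' b) ∈ Φp)).image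
          (fun b => σ (cs.simple i) b)) := by
      ext b
      simp only [Finset.mem_filter, Finset.mem_insert, Finset.mem_image]
      constructor
      · rintro ⟨hbΦ, hbneg⟩
        by_cases hbi : b = α i
        · exact Or.inl hbi
        · refine Or.inr ⟨σ (cs.simple i) b, ⟨hperm i b hbΦ hbi, ?_⟩, s_invol cs σ i b⟩
          rw [hcomp2 b]
          exact hbneg
      · rintro (hbi | ⟨c, ⟨hcΦ, hcneg⟩, hcb⟩)
        · subst hbi
          exact ⟨hαmem i, by rw [hwalpha, neg_neg]; exact hβ⟩
        · have hci : c ≠ α i := by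
            intro hci
            rw [hci, ← hβdef] at hcneg
            exact hβne hcneg
          subst hcb
          exact ⟨hperm i c hcΦ hci, by rw [hcomp1 c]; exact hcneg⟩
    have hP : Φp.filter (fun b => σ w b ∈ Φp) =
        ((Φp.filter (fun b => σ w' b ∈ Φp)).erase (α i)).image
          (fun b => σ (cs.simple i) b) := by
      ext b
      simp only [Finset.mem_filter, Finset.mem_image, Finset.mem_erase]
      constructor
      · rintro ⟨hbΦ, hbpos⟩
        have hbi : b ≠ α i := by
          intro hbi
          rw [hbi, hwalpha] at hbpos
          exact hβne hbpos
        refine ⟨σ (cs.simple i) b, ⟨?_, hperm i b hbΦ hbi, ?_⟩, s_invol cs σ i b⟩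
        · intro hcontra
          have hb' : b = σ (cs.simple i) (α i) := by rw [← hcontra, s_invol]
          rw [s_alpha cs σ α αv hrefl hpair i] at hb'
          exact hdisj (α i) (hαmem i) (hb' ▸ hbΦ)
        · rw [hcomp2 b]
          exact hbpos
      · rintro ⟨c, ⟨hci, hcΦ, hcpos⟩, hcb⟩
        subst hcb
        exact ⟨hperm i c hcΦ hci, by rw [hcomp1 c]; exact hcpos⟩
    have hnotin : α i ∉ (Φp.filter (fun b => -(σ w' b) ∈ Φp)).image
        (fun b => σ (cs.simple i) b) := by
      intro hcontra
      obtain ⟨c, hc, hceq⟩ := Finset.mem_image.mp hcontra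
      have hc' : c = σ (cs.simple i) (α i) := by rw [← hceq, s_invol]
      rw [s_alpha cs σ α αv hrefl hpair i] at hc'
      have hcΦ := (Finset.mem_filter.mp hc).1
      rw [hc'] at hcΦ
      exact hdisj (α i) (hαmem i) hcΦ
    have hinjN : ∀ a ∈ Φp.filter (fun b => -(σ w' b) ∈ Φp),
        ∀ b ∈ Φp.filter (fun b => -(σ w' b) ∈ Φp),
        σ (cs.simple i) a = σ (cs.simple i) b → a = b :=
      fun a _ b _ hab => (σ (cs.simple i)).injective hab
    have hinjP : ∀ a ∈ (Φp.filter (fun b => σ w' b ∈ Φp)).erase (α i),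
        ∀ b ∈ (Φp.filter (fun b => σ w' b ∈ Φp)).erase (α i),
        σ (cs.simple i) a = σ (cs.simple i) b → a = b :=
      fun a _ b _ hab => (σ (cs.simple i)).injective hab
    have hαiP : α i ∈ Φp.filter (fun b => σ w' b ∈ Φp) :=
      Finset.mem_filter.mpr ⟨hαmem i, by rw [← hβdef]; exact hβ⟩
    have hc : (1 : Qf Λ) - E β ≠ 0 := by
      rw [sub_ne_zero]
      exact fun h0 => E_ne_one hβ0 h0.symm
    rw [show TPcomp cs σ α (i :: ω') (fun u => xneg Φp * fdelta (1 : W) u) w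
      = TP cs σ α i (TPcomp cs σ α ω' (fun u => xneg Φp * fdelta (1 : W) u)) w from rfl]
    simp only [TP]
    rw [hzero, mul_zero, zero_add, hws, hIH, hwalpha, neg_neg]
    rw [hN, Finset.prod_insert hnotin, Finset.prod_image hinjN, hP, Finset.prod_image hinjP]
    simp only [hcomp1, hwalpha]
    rw [← Finset.mul_prod_erase (Φp.filter (fun b => σ w' b ∈ Φp))
      (fun b => (1 : Qf Λ) - E (σ w' b)) hαiP]
    rw [← hβdef]
    rw [div_mul_eq_mul_div, div_eq_iff hc]
    ring

end Aux

theorem support_and_normalization_of_stab_plus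
    (σ : W →* (Λ ≃+ Λ)) (hfaith : Function.Injective σ)
    (Φp : Finset Λ) (α : Fin n → Λ) (αv : Fin n → (Λ →+ ℤ))
    (hαmem : ∀ i, α i ∈ Φp)
    (hrefl : ∀ (i : Fin n) (l : Λ), σ (cs.simple i) l = l - αv i l • α i)
    (hpair : ∀ i, αv i (α i) = 2)
    (hperm : ∀ i, ∀ b ∈ Φp, b ≠ α i → σ (cs.simple i) b ∈ Φp)
    (hdisj : ∀ b ∈ Φp, -b ∉ Φp)
    (hreduced : ∀ b ∈ Φp, b + b ∉ Φp)
    -- w₀ is the longest element of W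
    (w0 : W) (hw0 : ∀ u : W, cs.length u ≤ cs.length w0)
    -- a choice of reduced word for each element of W
    (red : W → List (Fin n))
    (hred : ∀ v : W, cs.wordProd (red v) = v ∧ (red v).length = cs.length v)
    (w : W) :
    -- (i) support: stab⁺_w(v) = 0 unless v ≤ w
    (∀ v : W, ¬ BruhatLE cs v w → stabP cs σ Φp α red w v = 0) ∧
    -- (ii) normalization
    stabP cs σ Φp α red w w = qh Λ ^ (-(cs.length w : ℤ)) *
      (∏ b ∈ Φp.filter (fun b => -(σ w b) ∈ Φp), (qh Λ ^ 2 - E (σ w b))) *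
      (∏ b ∈ Φp.filter (fun b => σ w b ∈ Φp), (1 - E (σ w b))) := by
  have hfin : Finite W := finiteW cs w0 hw0 red hred
  constructor
  · intro v hv
    show qh Λ ^ (-(cs.length w : ℤ)) *
      TPcomp cs σ α (red w⁻¹) (fun u => xneg Φp * fdelta (1 : W) u) v = 0
    suffices h : TPcomp cs σ α (red w⁻¹) (fun u => xneg Φp * fdelta (1 : W) u) v = 0 by
      rw [h, mul_zero]
    by_contra hne
    obtain ⟨τ, hsub, hprod⟩ := sup_lemma cs σ Φp α (red w⁻¹) v hne
    apply hv
    refine ⟨(red w⁻¹).reverse, ?_, ?_, τ, hsub, hprod⟩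
    · rw [cs.wordProd_reverse, (hred w⁻¹).1, inv_inv]
    · rw [List.length_reverse, (hred w⁻¹).2, cs.length_inv]
  · have hm := main_lemma cs σ hfaith Φp α αv hαmem hrefl hpair hperm hdisj hfin red hred
      (red w⁻¹) w ((hred w⁻¹).1) (by rw [(hred w⁻¹).2, cs.length_inv])
    show qh Λ ^ (-(cs.length w : ℤ)) *
      TPcomp cs σ α (red w⁻¹) (fun u => xneg Φp * fdelta (1 : W) u) w = _
    rw [hm, ← mul_assoc]
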